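/- arXiv:2301.05594 — 3 statements merged into one kernel-verified Lean document; each statement's English description precedes it below -/
import Mathlib

section
/- Let Ω ⊆ ℝ^m be an open set, let E₁, E₂ be smooth vector fields on Ω, and let a, b, β : Ω → ℝ be smooth functions with β > 0 everywhere. Assume [E₁,E₂] = −a E₁ + b E₂, E₁β = 3bβ and E₂β = 3aβ. Define ρ := (2β)^{−1/3} and the vector fields U := ρE₁, V := ρE₂. Then [U,V] = 0 on Ω. -/
/-- The Lie bracket of two vector fields `X Y : Ω → ℝ^m` on an open set `Ω ⊆ ℝ^m`:
`[X,Y](p) = (D_p Y)(X(p)) − (D_p X)(Y(p))`. -/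
noncomputable def lieBracket {m : ℕ} (X Y : (Fin m → ℝ) → (Fin m → ℝ))
    (p : Fin m → ℝ) : Fin m → ℝ :=
  fderiv ℝ Y p (X p) - fderiv ℝ X p (Y p)

/-- The directional derivative of a function `φ` along a vector field `X`:
`(Xφ)(p) = (D_p φ)(X(p))`. -/
noncomputable def dirDeriv {m : ℕ} (X : (Fin m → ℝ) → (Fin m → ℝ))
    (φ : (Fin m → ℝ) → ℝ) (p : Fin m → ℝ) : ℝ :=
  fderiv ℝ φ p (X p)

/-- Let `Ω ⊆ ℝ^m` be open, `E₁, E₂` smooth vector fields on `Ω`,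
and `a, b, β : Ω → ℝ` smooth with `β > 0`. Assume `[E₁,E₂] = −aE₁ + bE₂`,
`E₁β = 3bβ` and `E₂β = 3aβ`. With `ρ := (2β)^(−1/3)`, `U := ρE₁`, `V := ρE₂`,
one has `[U,V] = 0` on `Ω`. -/
theorem stmt_2 {m : ℕ} (Ω : Set (Fin m → ℝ)) (hΩ : IsOpen Ω)
    (E₁ E₂ : (Fin m → ℝ) → (Fin m → ℝ))
    (a b β : (Fin m → ℝ) → ℝ)
    (hE₁ : ContDiffOn ℝ (⊤ : ℕ∞) E₁ Ω) (hE₂ : ContDiffOn ℝ (⊤ : ℕ∞) E₂ Ω)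
    (ha : ContDiffOn ℝ (⊤ : ℕ∞) a Ω) (hb : ContDiffOn ℝ (⊤ : ℕ∞) b Ω)
    (hβ : ContDiffOn ℝ (⊤ : ℕ∞) β Ω)
    (hβpos : ∀ p ∈ Ω, 0 < β p)
    (hbracket : ∀ p ∈ Ω, lieBracket E₁ E₂ p = -(a p) • E₁ p + (b p) • E₂ p)
    (hβ1 : ∀ p ∈ Ω, dirDeriv E₁ β p = 3 * b p * β p)
    (hβ2 : ∀ p ∈ Ω, dirDeriv E₂ β p = 3 * a p * β p)
    (ρ : (Fin m → ℝ) → ℝ) (hρ : ρ = fun p => (2 * β p) ^ (-(1 : ℝ) / 3))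
    (U V : (Fin m → ℝ) → (Fin m → ℝ))
    (hU : U = fun p => ρ p • E₁ p) (hV : V = fun p => ρ p • E₂ p) :
    ∀ p ∈ Ω, lieBracket U V p = 0 := by
  intro p hp
  have hmem : Ω ∈ nhds p := hΩ.mem_nhds hp
  have hβp : 0 < β p := hβpos p hp
  have h2β : (0:ℝ) < 2 * β p := by linarith
  have h2βne : (2 * β p) ≠ 0 := ne_of_gt h2β
  have hβd : DifferentiableAt ℝ β p :=
    ((hβ.differentiableOn (by simp)) p hp).differentiableAt hmem
  have hE₁d : DifferentiableAt ℝ E₁ p :=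
    ((hE₁.differentiableOn (by simp)) p hp).differentiableAt hmem
  have hE₂d : DifferentiableAt ℝ E₂ p :=
    ((hE₂.differentiableOn (by simp)) p hp).differentiableAt hmem
  have hβ' : HasFDerivAt β (fderiv ℝ β p) p := hβd.hasFDerivAt
  have hE₁' : HasFDerivAt E₁ (fderiv ℝ E₁ p) p := hE₁d.hasFDerivAt
  have hE₂' : HasFDerivAt E₂ (fderiv ℝ E₂ p) p := hE₂d.hasFDerivAt
  set c : ℝ := -(1:ℝ)/3 * (2*β p) ^ (-(1:ℝ)/3 - 1) * 2 with hc
  have hg : HasDerivAt (fun y : ℝ => (2*y) ^ (-(1:ℝ)/3)) c (β p) := by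
    have h1 : HasDerivAt (fun y : ℝ => 2*y) 2 (β p) := by
      simpa using (hasDerivAt_id (β p)).const_mul 2
    have h2 := h1.rpow_const (p := -(1:ℝ)/3) (Or.inl h2βne)
    convert h2 using 1
    rw [hc]; ring
  have hρ' : HasFDerivAt ρ (c • fderiv ℝ β p) p := by
    rw [hρ]
    exact hg.comp_hasFDerivAt p hβ'
  have hU' : HasFDerivAt U (ρ p • fderiv ℝ E₁ p + (c • fderiv ℝ β p).smulRight (E₁ p)) p := by
    rw [hU]; exact hρ'.smul hE₁'
  have hV' : HasFDerivAt V (ρ p • fderiv ℝ E₂ p + (c • fderiv ℝ β p).smulRight (E₂ p)) p := by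
    rw [hV]; exact hρ'.smul hE₂'
  have hUp : U p = ρ p • E₁ p := by rw [hU]
  have hVp : V p = ρ p • E₂ p := by rw [hV]
  have hval : lieBracket U V p =
      (ρ p * ρ p) • (fderiv ℝ E₂ p (E₁ p) - fderiv ℝ E₁ p (E₂ p))
      + (ρ p * (c * fderiv ℝ β p (E₁ p))) • E₂ p
      - (ρ p * (c * fderiv ℝ β p (E₂ p))) • E₁ p := by
    rw [lieBracket, hU'.fderiv, hV'.fderiv, hUp, hVp]
    simp only [ContinuousLinearMap.add_apply, ContinuousLinearMap.coe_smul',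
      Pi.smul_apply, ContinuousLinearMap.smulRight_apply, map_smul,
      ContinuousLinearMap.smul_apply, smul_eq_mul]
    module
  have hbr : fderiv ℝ E₂ p (E₁ p) - fderiv ℝ E₁ p (E₂ p)
      = -(a p) • E₁ p + (b p) • E₂ p := hbracket p hp
  have hd1 : fderiv ℝ β p (E₁ p) = 3 * b p * β p := hβ1 p hp
  have hd2 : fderiv ℝ β p (E₂ p) = 3 * a p * β p := hβ2 p hp
  have key : c * (3 * β p) = -(ρ p) := by
    rw [hc, hρ]
    have : (2 * β p) ^ (-(1:ℝ)/3 - 1) * (2 * β p) = (2 * β p) ^ (-(1:ℝ)/3) := by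
      rw [show (-(1:ℝ)/3 - 1) = -(1:ℝ)/3 + (-1) from by ring,
        Real.rpow_add h2β, Real.rpow_neg_one]
      field_simp
    nlinarith [this]
  have k1 : ρ p * (c * (3 * b p * β p)) = -(b p * (ρ p * ρ p)) := by
    have h : ρ p * (c * (3 * b p * β p)) = b p * ρ p * (c * (3 * β p)) := by ring
    rw [h, key]; ring
  have k2 : ρ p * (c * (3 * a p * β p)) = -(a p * (ρ p * ρ p)) := by
    have h : ρ p * (c * (3 * a p * β p)) = a p * ρ p * (c * (3 * β p)) := by ring
    rw [h, key]; ring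
  rw [hval, hbr, hd1, hd2, k1, k2]
  module
end

section
/- Let Ω ⊆ ℝ^m be an open set, let E₁, E₂, E₃ be smooth vector fields on Ω, and let γ₁₁², γ₂₁², γ₁₁³, λ : Ω → ℝ be smooth functions with λ > 0 everywhere and γ₁₁³ nowhere zero. Assume the Lie brackets satisfy [E₁,E₂] = −γ₁₁² E₁ − γ₂₁² E₂, [E₁,E₃] = −γ₁₁³ E₁, [E₂,E₃] = −γ₁₁³ E₂, and the derivative relations E₁λ = −3γ₂₁²λ, E₂λ = 3γ₁₁²λ, E₃λ = γ₁₁³λ, E₁(γ₁₁³) = 0, E₂(γ₁₁³) = 0, E₃(γ₁₁³) = (γ₁₁³)². Define α := (λ (γ₁₁³)²)^{−1/3} and the vector fields T := E₃, U := α(E₁ + E₂), V := α(E₂ − E₁). Then [T,U] = [T,V] = [U,V] = 0 on Ω. -/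
/-- Let `Ω ⊆ ℝ^m` be open, `E₁, E₂, E₃` smooth vector fields on `Ω`,
and `γ₁₁², γ₂₁², γ₁₁³, λ : Ω → ℝ` smooth with `λ > 0` and `γ₁₁³` nowhere zero.
Assume `[E₁,E₂] = −γ₁₁²E₁ − γ₂₁²E₂`, `[E₁,E₃] = −γ₁₁³E₁`, `[E₂,E₃] = −γ₁₁³E₂`,
`E₁λ = −3γ₂₁²λ`, `E₂λ = 3γ₁₁²λ`, `E₃λ = γ₁₁³λ`, `E₁(γ₁₁³) = 0`, `E₂(γ₁₁³) = 0`,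
`E₃(γ₁₁³) = (γ₁₁³)²`. With `α := (λ(γ₁₁³)²)^(−1/3)`, `T := E₃`, `U := α(E₁+E₂)`,
`V := α(E₂−E₁)`, one has `[T,U] = [T,V] = [U,V] = 0` on `Ω`. -/
theorem stmt_3 {m : ℕ} (Ω : Set (Fin m → ℝ)) (hΩ : IsOpen Ω)
    (E₁ E₂ E₃ : (Fin m → ℝ) → (Fin m → ℝ))
    (γ₁₁ γ₂₁ γ₁₁' lam : (Fin m → ℝ) → ℝ)
    (hE₁ : ContDiffOn ℝ (⊤ : ℕ∞) E₁ Ω) (hE₂ : ContDiffOn ℝ (⊤ : ℕ∞) E₂ Ω)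
    (hE₃ : ContDiffOn ℝ (⊤ : ℕ∞) E₃ Ω)
    (hγ₁₁ : ContDiffOn ℝ (⊤ : ℕ∞) γ₁₁ Ω) (hγ₂₁ : ContDiffOn ℝ (⊤ : ℕ∞) γ₂₁ Ω)
    (hγ₁₁' : ContDiffOn ℝ (⊤ : ℕ∞) γ₁₁' Ω) (hlam : ContDiffOn ℝ (⊤ : ℕ∞) lam Ω)
    (hlam_pos : ∀ p ∈ Ω, 0 < lam p)
    (hγ₁₁'_ne : ∀ p ∈ Ω, γ₁₁' p ≠ 0)
    (hbr12 : ∀ p ∈ Ω, lieBracket E₁ E₂ p = -(γ₁₁ p) • E₁ p - (γ₂₁ p) • E₂ p)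
    (hbr13 : ∀ p ∈ Ω, lieBracket E₁ E₃ p = -(γ₁₁' p) • E₁ p)
    (hbr23 : ∀ p ∈ Ω, lieBracket E₂ E₃ p = -(γ₁₁' p) • E₂ p)
    (hl1 : ∀ p ∈ Ω, dirDeriv E₁ lam p = -3 * γ₂₁ p * lam p)
    (hl2 : ∀ p ∈ Ω, dirDeriv E₂ lam p = 3 * γ₁₁ p * lam p)
    (hl3 : ∀ p ∈ Ω, dirDeriv E₃ lam p = γ₁₁' p * lam p)
    (hg1 : ∀ p ∈ Ω, dirDeriv E₁ γ₁₁' p = 0)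
    (hg2 : ∀ p ∈ Ω, dirDeriv E₂ γ₁₁' p = 0)
    (hg3 : ∀ p ∈ Ω, dirDeriv E₃ γ₁₁' p = (γ₁₁' p) ^ 2)
    (α : (Fin m → ℝ) → ℝ)
    (hα : α = fun p => (lam p * (γ₁₁' p) ^ 2) ^ (-(1 : ℝ) / 3))
    (T U V : (Fin m → ℝ) → (Fin m → ℝ))
    (hT : T = E₃)
    (hU : U = fun p => α p • (E₁ p + E₂ p))
    (hV : V = fun p => α p • (E₂ p - E₁ p)) :
    ∀ p ∈ Ω, lieBracket T U p = 0 ∧ lieBracket T V p = 0 ∧ lieBracket U V p = 0 := by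
  subst hU hV
  intro p hp
  rw [hT]
  have hmem : Ω ∈ nhds p := hΩ.mem_nhds hp
  have dE1 : DifferentiableAt ℝ E₁ p := (hE₁.contDiffAt hmem).differentiableAt (by simp)
  have dE2 : DifferentiableAt ℝ E₂ p := (hE₂.contDiffAt hmem).differentiableAt (by simp)
  have dE3 : DifferentiableAt ℝ E₃ p := (hE₃.contDiffAt hmem).differentiableAt (by simp)
  have dlam : DifferentiableAt ℝ lam p := (hlam.contDiffAt hmem).differentiableAt (by simp)
  have dγ : DifferentiableAt ℝ γ₁₁' p := (hγ₁₁'.contDiffAt hmem).differentiableAt (by simp)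
  set DE1 := fderiv ℝ E₁ p with hDE1
  set DE2 := fderiv ℝ E₂ p with hDE2
  set DE3 := fderiv ℝ E₃ p with hDE3
  set Dl := fderiv ℝ lam p with hDl
  set Dg := fderiv ℝ γ₁₁' p with hDg
  have hγne := hγ₁₁'_ne p hp
  have hlp := hlam_pos p hp
  have hgpos : (0:ℝ) < lam p * γ₁₁' p ^ 2 :=
    mul_pos hlp (lt_of_le_of_ne (sq_nonneg _) (Ne.symm (pow_ne_zero 2 hγne)))
  have hgne : lam p * γ₁₁' p ^ 2 ≠ 0 := ne_of_gt hgpos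
  -- derivative of g = lam * γ²
  have hprod : HasFDerivAt (fun q => lam q * γ₁₁' q ^ 2)
      (lam p • (γ₁₁' p • Dg + γ₁₁' p • Dg) + (γ₁₁' p * γ₁₁' p) • Dl) p := by
    have h := dlam.hasFDerivAt.mul (dγ.hasFDerivAt.mul dγ.hasFDerivAt)
    exact h.congr_of_eventuallyEq (Filter.Eventually.of_forall fun q => by
      simp only [Pi.mul_apply, pow_two])
  set c : ℝ := (-(1:ℝ)/3) * (lam p * γ₁₁' p ^ 2) ^ (-(1:ℝ)/3 - 1) with hc
  have hαd : HasFDerivAt α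
      (c • (lam p • (γ₁₁' p • Dg + γ₁₁' p • Dg) + (γ₁₁' p * γ₁₁' p) • Dl)) p := by
    rw [hα]
    exact hprod.rpow_const (Or.inl hgne)
  set Dα := fderiv ℝ α p with hDα
  have hDαeq : Dα = c • (lam p • (γ₁₁' p • Dg + γ₁₁' p • Dg) + (γ₁₁' p * γ₁₁' p) • Dl) :=
    hαd.fderiv
  have hval : ∀ w : Fin m → ℝ, Dα w =
      c * (lam p * (γ₁₁' p * Dg w + γ₁₁' p * Dg w) + γ₁₁' p * γ₁₁' p * Dl w) := by
    intro w
    rw [hDαeq]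
    simp [ContinuousLinearMap.smul_apply, ContinuousLinearMap.add_apply, smul_eq_mul]
    ring
  -- directional derivative values
  have dl1 : Dl (E₁ p) = -3 * γ₂₁ p * lam p := hl1 p hp
  have dl2 : Dl (E₂ p) = 3 * γ₁₁ p * lam p := hl2 p hp
  have dl3 : Dl (E₃ p) = γ₁₁' p * lam p := hl3 p hp
  have dg1 : Dg (E₁ p) = 0 := hg1 p hp
  have dg2 : Dg (E₂ p) = 0 := hg2 p hp
  have dg3 : Dg (E₃ p) = γ₁₁' p ^ 2 := hg3 p hp
  have hA : α p = (lam p * γ₁₁' p ^ 2) ^ (-(1:ℝ)/3) := by rw [hα]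
  have key : (lam p * γ₁₁' p ^ 2) ^ (-(1:ℝ)/3 - 1) * (lam p * γ₁₁' p ^ 2) = α p := by
    rw [hA, Real.rpow_sub_one hgne]
    field_simp
  have hα1 : Dα (E₁ p) = γ₂₁ p * α p := by
    rw [hval, dl1, dg1, ← key, hc]; ring
  have hα2 : Dα (E₂ p) = -(γ₁₁ p) * α p := by
    rw [hval, dl2, dg2, ← key, hc]; ring
  have hα3 : Dα (E₃ p) = -(γ₁₁' p) * α p := by
    rw [hval, dl3, dg3, ← key, hc]; ring
  -- bracket relations as vector equations
  have b12 : DE2 (E₁ p) - DE1 (E₂ p) = -(γ₁₁ p) • E₁ p - (γ₂₁ p) • E₂ p := by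
    have h := hbr12 p hp; simpa [lieBracket] using h
  have b13 : DE3 (E₁ p) - DE1 (E₃ p) = -(γ₁₁' p) • E₁ p := by
    have h := hbr13 p hp; simpa [lieBracket] using h
  have b23 : DE3 (E₂ p) - DE2 (E₃ p) = -(γ₁₁' p) • E₂ p := by
    have h := hbr23 p hp; simpa [lieBracket] using h
  have e31 : DE3 (E₁ p) = -(γ₁₁' p) • E₁ p + DE1 (E₃ p) := sub_eq_iff_eq_add.mp b13
  have e32 : DE3 (E₂ p) = -(γ₁₁' p) • E₂ p + DE2 (E₃ p) := sub_eq_iff_eq_add.mp b23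
  have e21 : DE2 (E₁ p) = (-(γ₁₁ p) • E₁ p - (γ₂₁ p) • E₂ p) + DE1 (E₂ p) :=
    sub_eq_iff_eq_add.mp b12
  -- differentiability / fderiv of U and V
  have dα : DifferentiableAt ℝ α p := hαd.differentiableAt
  have hUd : HasFDerivAt (fun q => α q • (E₁ q + E₂ q))
      (α p • (DE1 + DE2) + Dα.smulRight (E₁ p + E₂ p)) p := by
    have h := hαd.differentiableAt.hasFDerivAt.smul (dE1.hasFDerivAt.add dE2.hasFDerivAt)
    rwa [← hDα] at h
  have hVd : HasFDerivAt (fun q => α q • (E₂ q - E₁ q))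
      (α p • (DE2 - DE1) + Dα.smulRight (E₂ p - E₁ p)) p := by
    have h := hαd.differentiableAt.hasFDerivAt.smul (dE2.hasFDerivAt.sub dE1.hasFDerivAt)
    rwa [← hDα] at h
  refine ⟨?_, ?_, ?_⟩
  · show fderiv ℝ (fun q => α q • (E₁ q + E₂ q)) p (E₃ p)
        - fderiv ℝ E₃ p (α p • (E₁ p + E₂ p)) = 0
    rw [hUd.fderiv, ← hDE3]
    simp only [ContinuousLinearMap.add_apply, ContinuousLinearMap.smul_apply,
      ContinuousLinearMap.smulRight_apply, map_add, map_smul,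
      ContinuousLinearMap.coe_add', ContinuousLinearMap.coe_smul']
    rw [hα3, e31, e32]
    module
  · show fderiv ℝ (fun q => α q • (E₂ q - E₁ q)) p (E₃ p)
        - fderiv ℝ E₃ p (α p • (E₂ p - E₁ p)) = 0
    rw [hVd.fderiv, ← hDE3]
    simp only [ContinuousLinearMap.add_apply, ContinuousLinearMap.smul_apply,
      ContinuousLinearMap.smulRight_apply, ContinuousLinearMap.sub_apply,
      map_add, map_smul, map_sub]
    rw [hα3, e31, e32]
    module
  · show fderiv ℝ (fun q => α q • (E₂ q - E₁ q)) p (α p • (E₁ p + E₂ p))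
        - fderiv ℝ (fun q => α q • (E₁ q + E₂ q)) p (α p • (E₂ p - E₁ p)) = 0
    rw [hUd.fderiv, hVd.fderiv]
    simp only [ContinuousLinearMap.add_apply, ContinuousLinearMap.smul_apply,
      ContinuousLinearMap.smulRight_apply, ContinuousLinearMap.sub_apply,
      map_add, map_smul, map_sub]
    rw [hα1, hα2, e21]
    module
end

section
/- Let U ⊆ ℝ² be an open set with coordinates (u,v), and let a, b, β : U → ℝ be smooth functions with β > 0 everywhere. Set ρ := (2β)^{−1/3} and assume ∂_u β = 3ρbβ, ∂_v β = 3ρaβ, ∂_u a = ∂_v b, and ∂_v a + ∂_u b = ρ(2 + a² + b² − 2β²). Then the function f := log(β/√2) satisfies Δf = (3 − 6e^{2f}) e^{−(2/3)f} on U, where Δf = ∂²f/∂u² + ∂²f/∂v² is the Euclidean Laplacian. Equivalently, log β satisfies Δ(log β) = −3·2^{1/3}(β² − 1) β^{−2/3}. -/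
/-- The partial derivative `∂f/∂u` of a function `f : ℝ² → ℝ` with respect to the
first coordinate. -/
noncomputable def pderivU (f : ℝ × ℝ → ℝ) (p : ℝ × ℝ) : ℝ :=
  fderiv ℝ f p (1, 0)

/-- The partial derivative `∂f/∂v` of a function `f : ℝ² → ℝ` with respect to the
second coordinate. -/
noncomputable def pderivV (f : ℝ × ℝ → ℝ) (p : ℝ × ℝ) : ℝ :=
  fderiv ℝ f p (0, 1)

/-- The Euclidean Laplacian `Δf = ∂²f/∂u² + ∂²f/∂v²` of a function `f : ℝ² → ℝ`. -/
noncomputable def lap (f : ℝ × ℝ → ℝ) (p : ℝ × ℝ) : ℝ :=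
  pderivU (pderivU f) p + pderivV (pderivV f) p

/-- Let `U ⊆ ℝ²` be open with coordinates `(u,v)`, and let
`a, b, β : U → ℝ` be smooth with `β > 0`. Set `ρ := (2β)^(−1/3)` and assume
`∂_u β = 3ρbβ`, `∂_v β = 3ρaβ`, `∂_u a = ∂_v b`, and
`∂_v a + ∂_u b = ρ(2 + a² + b² − 2β²)`. Then `f := log(β/√2)` satisfies
`Δf = (3 − 6e^{2f})e^{−(2/3)f}` on `U`; equivalently, `log β` satisfies
`Δ(log β) = −3·2^{1/3}(β² − 1)β^{−2/3}`. -/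
theorem stmt_4 (U : Set (ℝ × ℝ)) (hU : IsOpen U)
    (a b β : ℝ × ℝ → ℝ)
    (ha : ContDiffOn ℝ (⊤ : ℕ∞) a U) (hb : ContDiffOn ℝ (⊤ : ℕ∞) b U)
    (hβ : ContDiffOn ℝ (⊤ : ℕ∞) β U)
    (hβpos : ∀ p ∈ U, 0 < β p)
    (ρ : ℝ × ℝ → ℝ) (hρ : ρ = fun p => (2 * β p) ^ (-(1 : ℝ) / 3))
    (hβu : ∀ p ∈ U, pderivU β p = 3 * ρ p * b p * β p)
    (hβv : ∀ p ∈ U, pderivV β p = 3 * ρ p * a p * β p)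
    (hab1 : ∀ p ∈ U, pderivU a p = pderivV b p)
    (hab2 : ∀ p ∈ U,
      pderivV a p + pderivU b p = ρ p * (2 + (a p) ^ 2 + (b p) ^ 2 - 2 * (β p) ^ 2))
    (f : ℝ × ℝ → ℝ) (hf : f = fun p => Real.log (β p / Real.sqrt 2)) :
    (∀ p ∈ U,
      lap f p = (3 - 6 * Real.exp (2 * f p)) * Real.exp (-(2 / 3) * f p)) ∧
    (∀ p ∈ U,
      lap (fun q => Real.log (β q)) p
        = -3 * (2 : ℝ) ^ ((1 : ℝ) / 3) * ((β p) ^ 2 - 1) * (β p) ^ (-(2 : ℝ) / 3)) := by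
  set L : ℝ × ℝ → ℝ := fun q => Real.log (β q) with hL
  -- first derivatives of L on U
  have hLd : ∀ q ∈ U, HasFDerivAt L ((β q)⁻¹ • fderiv ℝ β q) q := by
    intro q hq
    have hβq : DifferentiableAt ℝ β q :=
      (hβ.contDiffAt (hU.mem_nhds hq)).differentiableAt (by simp)
    exact (Real.hasDerivAt_log (hβpos q hq).ne').comp_hasFDerivAt q hβq.hasFDerivAt
  have hLu : ∀ q ∈ U, pderivU L q = 3 * ρ q * b q := by
    intro q hq
    rw [pderivU, (hLd q hq).fderiv]
    simp only [ContinuousLinearMap.smul_apply, smul_eq_mul]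
    rw [← pderivU, hβu q hq]
    field_simp [(hβpos q hq).ne']
  have hLv : ∀ q ∈ U, pderivV L q = 3 * ρ q * a q := by
    intro q hq
    rw [pderivV, (hLd q hq).fderiv]
    simp only [ContinuousLinearMap.smul_apply, smul_eq_mul]
    rw [← pderivV, hβv q hq]
    field_simp [(hβpos q hq).ne']
  -- key computation
  have key : ∀ p ∈ U, lap L p = 6 * ρ p ^ 2 * (1 - β p ^ 2) := by
    intro p hp
    have hβp : (0:ℝ) < β p := hβpos p hp
    have h2β : (0:ℝ) < 2 * β p := by linarith
    have hβd : DifferentiableAt ℝ β p :=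
      (hβ.contDiffAt (hU.mem_nhds hp)).differentiableAt (by simp)
    have had : DifferentiableAt ℝ a p :=
      (ha.contDiffAt (hU.mem_nhds hp)).differentiableAt (by simp)
    have hbd : DifferentiableAt ℝ b p :=
      (hb.contDiffAt (hU.mem_nhds hp)).differentiableAt (by simp)
    have hρ' : HasFDerivAt ρ
        (((-(1:ℝ)/3) * (2 * β p) ^ (-(1:ℝ)/3 - 1)) • ((2:ℝ) • fderiv ℝ β p)) p := by
      rw [hρ]
      exact (Real.hasDerivAt_rpow_const (Or.inl h2β.ne')).comp_hasFDerivAt p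
        (hβd.hasFDerivAt.const_mul 2)
    have hGu : HasFDerivAt (fun q => 3 * ρ q * b q)
        ((3 * ρ p) • fderiv ℝ b p +
          b p • ((3:ℝ) • (((-(1:ℝ)/3) * (2 * β p) ^ (-(1:ℝ)/3 - 1)) • ((2:ℝ) • fderiv ℝ β p)))) p :=
      (hρ'.const_mul 3).mul hbd.hasFDerivAt
    have hGv : HasFDerivAt (fun q => 3 * ρ q * a q)
        ((3 * ρ p) • fderiv ℝ a p +
          a p • ((3:ℝ) • (((-(1:ℝ)/3) * (2 * β p) ^ (-(1:ℝ)/3 - 1)) • ((2:ℝ) • fderiv ℝ β p)))) p :=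
      (hρ'.const_mul 3).mul had.hasFDerivAt
    have hu2 : pderivU (pderivU L) p
        = 3 * ρ p * pderivU b p +
          b p * (3 * ((-(1:ℝ)/3) * (2 * β p) ^ (-(1:ℝ)/3 - 1) * (2 * pderivU β p))) := by
      have hev : pderivU L =ᶠ[nhds p] (fun q => 3 * ρ q * b q) :=
        Filter.eventually_of_mem (hU.mem_nhds hp) (fun q hq => hLu q hq)
      rw [pderivU, hev.fderiv_eq, hGu.fderiv]
      simp only [ContinuousLinearMap.add_apply, ContinuousLinearMap.smul_apply, smul_eq_mul,
        pderivU]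
    have hv2 : pderivV (pderivV L) p
        = 3 * ρ p * pderivV a p +
          a p * (3 * ((-(1:ℝ)/3) * (2 * β p) ^ (-(1:ℝ)/3 - 1) * (2 * pderivV β p))) := by
      have hev : pderivV L =ᶠ[nhds p] (fun q => 3 * ρ q * a q) :=
        Filter.eventually_of_mem (hU.mem_nhds hp) (fun q hq => hLv q hq)
      rw [pderivV, hev.fderiv_eq, hGv.fderiv]
      simp only [ContinuousLinearMap.add_apply, ContinuousLinearMap.smul_apply, smul_eq_mul,
        pderivV]
    have hc : (2 * β p) ^ (-(1:ℝ)/3 - 1) * (2 * β p) = ρ p := by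
      rw [hρ]
      show (2 * β p) ^ (-(1:ℝ)/3 - 1) * (2 * β p) = (2 * β p) ^ (-(1:ℝ)/3)
      nth_rewrite 2 [← Real.rpow_one (2 * β p)]
      rw [← Real.rpow_add h2β]
      norm_num
    rw [lap, hu2, hv2, hβu p hp, hβv p hp]
    linear_combination (3 * ρ p) * (hab2 p hp) +
      (-3 * ρ p * ((a p) ^ 2 + (b p) ^ 2)) * hc
  -- rpow algebra: ρ² in terms of β
  have hρsq : ∀ p ∈ U, 6 * ρ p ^ 2 * (1 - β p ^ 2)
      = 3 * (2:ℝ) ^ ((1:ℝ)/3) * (1 - β p ^ 2) * (β p) ^ (-(2:ℝ)/3) := by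
    intro p hp
    have hβp : (0:ℝ) < β p := hβpos p hp
    have h2β : (0:ℝ) < 2 * β p := by linarith
    have h1 : ρ p ^ 2 = (2 * β p) ^ (-(2:ℝ)/3) := by
      rw [hρ]
      show ((2 * β p) ^ (-(1:ℝ)/3)) ^ 2 = (2 * β p) ^ (-(2:ℝ)/3)
      rw [sq, ← Real.rpow_add h2β]
      norm_num
    have h2 : (2 * β p) ^ (-(2:ℝ)/3) = (2:ℝ) ^ (-(2:ℝ)/3) * (β p) ^ (-(2:ℝ)/3) :=
      Real.mul_rpow (by norm_num) hβp.le
    have h3 : (2:ℝ) ^ ((1:ℝ)/3) = 2 * (2:ℝ) ^ (-(2:ℝ)/3) := by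
      nth_rewrite 2 [← Real.rpow_one 2]
      rw [← Real.rpow_add (by norm_num : (0:ℝ) < 2)]
      norm_num
    rw [h1, h2, h3]
    ring
  constructor
  · -- statement for f
    intro p hp
    have hβp : (0:ℝ) < β p := hβpos p hp
    have hfU : ∀ q ∈ U, pderivU f q = pderivU L q := by
      intro q hq
      have hev : f =ᶠ[nhds q] (fun r => L r - Real.log (Real.sqrt 2)) :=
        Filter.eventually_of_mem (hU.mem_nhds hq) (fun r hr => by
          rw [hf]
          exact Real.log_div (hβpos r hr).ne' (by positivity))
      rw [pderivU, pderivU, hev.fderiv_eq, fderiv_sub_const]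
    have hfV : ∀ q ∈ U, pderivV f q = pderivV L q := by
      intro q hq
      have hev : f =ᶠ[nhds q] (fun r => L r - Real.log (Real.sqrt 2)) :=
        Filter.eventually_of_mem (hU.mem_nhds hq) (fun r hr => by
          rw [hf]
          exact Real.log_div (hβpos r hr).ne' (by positivity))
      rw [pderivV, pderivV, hev.fderiv_eq, fderiv_sub_const]
    have hlapf : lap f p = lap L p := by
      have hevU : pderivU f =ᶠ[nhds p] pderivU L :=
        Filter.eventually_of_mem (hU.mem_nhds hp) (fun q hq => hfU q hq)
      have hevV : pderivV f =ᶠ[nhds p] pderivV L :=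
        Filter.eventually_of_mem (hU.mem_nhds hp) (fun q hq => hfV q hq)
      rw [lap, lap, pderivU, pderivU, hevU.fderiv_eq, pderivV, pderivV, hevV.fderiv_eq]
    rw [hlapf, key p hp, hρsq p hp, hf]
    simp only
    have hsq2 : (0:ℝ) < Real.sqrt 2 := by positivity
    have ht : (0:ℝ) < β p / Real.sqrt 2 := by positivity
    have he1 : Real.exp (2 * Real.log (β p / Real.sqrt 2)) = (β p) ^ 2 / 2 := by
      rw [two_mul, Real.exp_add, Real.exp_log ht, div_mul_div_comm,
        Real.mul_self_sqrt (by norm_num : (0:ℝ) ≤ 2), sq]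
    have he2 : Real.exp (-(2/3 : ℝ) * Real.log (β p / Real.sqrt 2))
        = (β p / Real.sqrt 2) ^ (-(2:ℝ)/3) := by
      rw [Real.rpow_def_of_pos ht]
      ring_nf
    have he3 : (β p / Real.sqrt 2) ^ (-(2:ℝ)/3)
        = (β p) ^ (-(2:ℝ)/3) * (2:ℝ) ^ ((1:ℝ)/3) := by
      rw [Real.div_rpow hβp.le hsq2.le, Real.sqrt_eq_rpow]
      rw [← Real.rpow_mul (by norm_num : (0:ℝ) ≤ 2)]
      rw [div_eq_mul_inv, ← Real.rpow_neg (by norm_num : (0:ℝ) ≤ 2)]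
      norm_num
    rw [he1, he2, he3]
    ring
  · intro p hp
    rw [key p hp, hρsq p hp]
    ring
end
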